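/- arXiv:2311.03708 — 6 statements merged into one kernel-verified Lean document; each statement's English description precedes it below -/
import Mathlib

section
/- Let Q be a quandle such that for each n ≥ 1, Q has only finitely many congruences of index n. Then for every finite-index congruence γ on Q there exists a fully invariant finite-index congruence γ' on Q with γ' ⊆ γ. -/
open Quandles

/-- A quandle homomorphism: a map preserving the quandle operation. -/
def IsQdlHom {A B : Type} [Shelf A] [Shelf B] (f : A → B) : Prop :=
  ∀ a b : A, f (a ◃ b) = f a ◃ f b

/-- A congruence on a quandle: an equivalence relation compatible with `◃` and `◃⁻¹`. -/
def IsQdlCong {Q : Type} [Quandle Q] (α : Setoid Q) : Prop :=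
  ∀ a b c d : Q, α.r a b → α.r c d →
    α.r (a ◃ c) (b ◃ d) ∧ α.r (a ◃⁻¹ c) (b ◃⁻¹ d)

/-- A fully invariant congruence: invariant under all quandle endomorphisms. -/
def IsFullyInvariant {Q : Type} [Quandle Q] (α : Setoid Q) : Prop :=
  ∀ f : Q → Q, IsQdlHom f → ∀ a b : Q, α.r a b → α.r (f a) (f b)

/-- A residually finite quandle. -/
def QdlResiduallyFinite (Q : Type) [Quandle Q] : Prop :=
  ∀ a b : Q, a ≠ b → ∃ (F : Type) (_ : Quandle F) (_ : Finite F) (f : Q → F),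
    IsQdlHom f ∧ f a ≠ f b

lemma hom_invAct {Q : Type} [Quandle Q] {f : Q → Q} (hf : IsQdlHom f) (a b : Q) :
    f (a ◃⁻¹ b) = f a ◃⁻¹ f b := by
  have h1 : f a ◃ f (a ◃⁻¹ b) = f b := by rw [← hf, Rack.right_inv]
  have h2 := Rack.left_inv (f a) (f (a ◃⁻¹ b))
  rw [h1] at h2
  exact h2.symm

/-- If a quandle has only finitely many congruences of each index `n ≥ 1`, then every
finite-index congruence contains a fully invariant finite-index congruence. -/
theorem stmt_0 {Q : Type} [Quandle Q]
    (hfin : ∀ n : ℕ, 1 ≤ n →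
      {α : Setoid Q | IsQdlCong α ∧ Nat.card (Quotient α) = n}.Finite)
    (γ : Setoid Q) (hγ : IsQdlCong γ) (hγfin : Finite (Quotient γ)) :
    ∃ γ' : Setoid Q, IsQdlCong γ' ∧ Finite (Quotient γ') ∧ IsFullyInvariant γ' ∧
      ∀ a b : Q, γ'.r a b → γ.r a b := by
  rcases isEmpty_or_nonempty Q with hQ | hQ
  · refine ⟨γ, hγ, hγfin, ?_, fun a b h => h⟩
    intro f _ a b _
    exact (hQ.false a).elim
  -- the fully invariant congruence
  set γ' : Setoid Q :=
    ⟨fun a b => ∀ f : Q → Q, IsQdlHom f → γ.r (f a) (f b),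
     ⟨fun a f _ => γ.refl (f a),
      fun h f hf => γ.symm (h f hf),
      fun h1 h2 f hf => γ.trans (h1 f hf) (h2 f hf)⟩⟩ with hγ'
  have hγ'r : ∀ a b : Q, γ'.r a b ↔ ∀ f : Q → Q, IsQdlHom f → γ.r (f a) (f b) :=
    fun a b => Iff.rfl
  have hcong : IsQdlCong γ' := by
    intro a b c d hab hcd
    constructor
    · intro f hf
      rw [hf, hf]
      exact (hγ _ _ _ _ (hab f hf) (hcd f hf)).1
    · intro f hf
      rw [hom_invAct hf, hom_invAct hf]
      exact (hγ _ _ _ _ (hab f hf) (hcd f hf)).2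
  have hFI : IsFullyInvariant γ' := by
    intro g hg a b hab f hf
    have : IsQdlHom (f ∘ g) := by
      intro x y
      show f (g (x ◃ y)) = f (g x) ◃ f (g y)
      rw [hg, hf]
    exact hab (f ∘ g) this
  have hid : IsQdlHom (id : Q → Q) := fun a b => rfl
  have hsub : ∀ a b : Q, γ'.r a b → γ.r a b := fun a b h => h id hid
  -- finiteness
  set n := Nat.card (Quotient γ) with hn
  -- quotient by comap injects into quotient by γ
  have comap_fin : ∀ f : Q → Q, Finite (Quotient (Setoid.comap f γ)) ∧
      Nat.card (Quotient (Setoid.comap f γ)) ≤ n := by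
    intro f
    have hresp : ∀ a b : Q, (Setoid.comap f γ).r a b →
        (Quotient.mk γ (f a)) = Quotient.mk γ (f b) := fun a b h => Quotient.sound h
    set φ : Quotient (Setoid.comap f γ) → Quotient γ :=
      Quotient.lift (fun a => Quotient.mk γ (f a)) hresp with hφ
    have hinj : Function.Injective φ := by
      rintro ⟨a⟩ ⟨b⟩ h
      have h' : Quotient.mk γ (f a) = Quotient.mk γ (f b) := h
      have h2 : γ.r (f a) (f b) := Quotient.exact h'
      exact Quotient.sound h2
    exact ⟨Finite.of_injective φ hinj, Nat.card_le_card_of_injective φ hinj⟩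
  set S : Set (Setoid Q) := {α | ∃ f : Q → Q, IsQdlHom f ∧ α = Setoid.comap f γ} with hS
  have hScong : ∀ α ∈ S, IsQdlCong α := by
    rintro α ⟨f, hf, rfl⟩ a b c d hab hcd
    constructor
    · show γ.r (f (a ◃ c)) (f (b ◃ d))
      rw [hf, hf]
      exact (hγ _ _ _ _ hab hcd).1
    · show γ.r (f (a ◃⁻¹ c)) (f (b ◃⁻¹ d))
      rw [hom_invAct hf, hom_invAct hf]
      exact (hγ _ _ _ _ hab hcd).2
  have hSfinQ : ∀ α : S, Finite (Quotient α.1) := by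
    rintro ⟨α, f, hf, rfl⟩
    exact (comap_fin f).1
  have hSfin : S.Finite := by
    have hsub2 : S ⊆ ⋃ k ∈ Set.Icc 1 n,
        {α : Setoid Q | IsQdlCong α ∧ Nat.card (Quotient α) = k} := by
      rintro α hα
      obtain ⟨f, hf, rfl⟩ := hα
      have hfinq := (comap_fin f).1
      have hle := (comap_fin f).2
      haveI : Nonempty (Quotient (Setoid.comap f γ)) := ⟨Quotient.mk _ hQ.some⟩
      have hpos : 0 < Nat.card (Quotient (Setoid.comap f γ)) := Nat.card_pos
      refine Set.mem_biUnion ⟨hpos, hle⟩ ⟨hScong _ ⟨f, hf, rfl⟩, rfl⟩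
    exact Set.Finite.subset
      ((Set.finite_Icc 1 n).biUnion fun k hk => hfin k hk.1) hsub2
  have : Finite S := hSfin
  have hγ'fin : Finite (Quotient γ') := by
    have hresp : ∀ a b : Q, γ'.r a b →
        (fun α : S => Quotient.mk α.1 a) = fun α : S => Quotient.mk α.1 b := by
      intro a b h
      funext α
      obtain ⟨f, hf, hα⟩ := α.2
      refine Quotient.sound ?_
      rw [hα]
      exact h f hf
    set φ : Quotient γ' → ∀ α : S, Quotient α.1 := Quotient.lift _ hresp with hφ
    have hinj : Function.Injective φ := by
      rintro ⟨a⟩ ⟨b⟩ h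
      refine Quotient.sound ?_
      intro f hf
      have hmem : Setoid.comap f γ ∈ S := ⟨f, hf, rfl⟩
      have h2 := congrFun h ⟨Setoid.comap f γ, hmem⟩
      have h3 : Quotient.mk (Setoid.comap f γ) a = Quotient.mk (Setoid.comap f γ) b := h2
      have h4 : (Setoid.comap f γ).r a b := Quotient.exact h3
      exact h4
    exact Finite.of_injective φ hinj
  exact ⟨γ', hcong, hγ'fin, hFI, hsub⟩
end

section
/- Let Q be a residually finite quandle such that for each n ≥ 1, Q has only finitely many congruences of index n. Then Q is Hopfian, i.e., every surjective quandle endomorphism of Q is injective (hence an automorphism). -/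
open Quandles

lemma hom_invAct_s1 {A B : Type} [Quandle A] [Quandle B] {h : A → B} (hh : IsQdlHom h)
    (x y : A) : h (x ◃⁻¹ y) = h x ◃⁻¹ h y := by
  have : h y = h x ◃ h (x ◃⁻¹ y) := by
    conv_lhs => rw [← Rack.act_invAct_eq x y, hh]
  rw [this, Rack.invAct_act_eq]

lemma ker_cong {A B : Type} [Quandle A] [Quandle B] {h : A → B} (hh : IsQdlHom h) :
    IsQdlCong (Setoid.ker h) := by
  intro a b c d hab hcd
  constructor
  · show h _ = h _
    rw [hh, hh, hab, hcd]
  · show h _ = h _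
    rw [hom_invAct_s1 hh, hom_invAct_s1 hh, hab, hcd]

lemma hom_iterate {A : Type} [Quandle A] {f : A → A} (hf : IsQdlHom f) (k : ℕ) :
    IsQdlHom f^[k] := by
  induction k with
  | zero => intro a b; simp
  | succ n ih =>
    intro a b
    simp only [Function.iterate_succ', Function.comp_apply]
    rw [ih, hf]

/-- A residually finite quandle with only finitely many congruences of each index `n ≥ 1`
is Hopfian: every surjective quandle endomorphism is injective. -/
theorem stmt_1 {Q : Type} [Quandle Q]
    (hrf : QdlResiduallyFinite Q)
    (hfin : ∀ n : ℕ, 1 ≤ n →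
      {α : Setoid Q | IsQdlCong α ∧ Nat.card (Quotient α) = n}.Finite)
    (f : Q → Q) (hf : IsQdlHom f) (hsurj : Function.Surjective f) :
    Function.Injective f := by
  intro a b hab
  by_contra hne
  obtain ⟨F, _, _, g, hg, hgne⟩ := hrf a b hne
  -- the maps g ∘ f^[k]
  set h : ℕ → Q → F := fun k => g ∘ f^[k] with hh
  have hhom : ∀ k, IsQdlHom (h k) := by
    intro k x y
    simp only [hh, Function.comp_apply]
    rw [hom_iterate hf k x y, hg]
  set N := Nat.card F with hN
  set S : Set (Setoid Q) := ⋃ n ∈ Finset.Icc 1 N,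
      {α : Setoid Q | IsQdlCong α ∧ Nat.card (Quotient α) = n} with hS
  have hSfin : S.Finite := Set.Finite.biUnion (Finset.finite_toSet _)
      (fun n hn => hfin n (Finset.mem_Icc.mp hn).1)
  have hmem : ∀ k, Setoid.ker (h k) ∈ S := by
    intro k
    have e := Setoid.quotientKerEquivRange (h k)
    have hfinQ : Finite (Quotient (Setoid.ker (h k))) := Finite.of_equiv _ e.symm
    have hne' : Nonempty (Quotient (Setoid.ker (h k))) := ⟨⟦a⟧⟩
    have h1 : 1 ≤ Nat.card (Quotient (Setoid.ker (h k))) := Nat.card_pos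
    have h2 : Nat.card (Quotient (Setoid.ker (h k))) ≤ N := by
      calc Nat.card (Quotient (Setoid.ker (h k))) = Nat.card (Set.range (h k)) :=
            Nat.card_eq_of_bijective e e.bijective
        _ ≤ Nat.card F := Nat.card_le_card_of_injective _ Subtype.val_injective
    exact Set.mem_biUnion (Finset.mem_Icc.mpr ⟨h1, h2⟩) ⟨ker_cong (hhom k), rfl⟩
  haveI : Finite S := hSfin.to_subtype
  have := Finite.exists_ne_map_eq_of_infinite (fun k : ℕ => (⟨Setoid.ker (h k), hmem k⟩ : S))
  obtain ⟨i, j, hij, heq⟩ := this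
  wlog hlt : i < j generalizing i j
  · exact this j i hij.symm heq.symm (by omega)
  have hker : Setoid.ker (h i) = Setoid.ker (h j) := congrArg Subtype.val heq
  set m := j - i with hm
  have hsur : Function.Surjective f^[i] := Function.Surjective.iterate hsurj i
  have key : ∀ x y : Q, g x = g y ↔ g (f^[m] x) = g (f^[m] y) := by
    intro x y
    obtain ⟨u, hu⟩ := hsur x
    obtain ⟨v, hv⟩ := hsur y
    have hji : j = m + i := by omega
    have h1 : h i u = g x := by simp [hh, hu]
    have h2 : h i v = g y := by simp [hh, hv]
    have h3 : h j u = g (f^[m] x) := by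
      simp [hh, hji, Function.iterate_add_apply, hu]
    have h4 : h j v = g (f^[m] y) := by
      simp [hh, hji, Function.iterate_add_apply, hv]
    rw [← h1, ← h2, ← h3, ← h4]
    constructor
    · intro hxy
      have : Setoid.ker (h i) u v := hxy
      rw [hker] at this
      exact this
    · intro hxy
      have : Setoid.ker (h j) u v := hxy
      rw [← hker] at this
      exact this
  have hfab : f^[m] a = f^[m] b := by
    have : m ≠ 0 := by omega
    obtain ⟨m', hm'⟩ := Nat.exists_eq_succ_of_ne_zero this
    rw [hm']
    simp [Function.iterate_succ_apply, hab]
  exact hgne ((key a b).mpr (by rw [hfab]))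
end

section
/- Let Q be a residually finite quandle such that for each n ≥ 1, Q has only finitely many congruences of index n. Then the endomorphism monoid End(Q) is a residually finite monoid: for any two distinct quandle endomorphisms f, g of Q there exist a finite monoid M and a monoid homomorphism Φ : End(Q) → M with Φ(f) ≠ Φ(g). -/
open Quandles

/-- The endomorphism monoid of a quandle: quandle endomorphisms under composition. -/
def QdlEnd (Q : Type) [Quandle Q] : Type := {f : Q → Q // IsQdlHom f}

instance (Q : Type) [Quandle Q] : Monoid (QdlEnd Q) where
  mul f g := ⟨f.1 ∘ g.1, fun a b => by
    show f.1 (g.1 (a ◃ b)) = f.1 (g.1 a) ◃ f.1 (g.1 b)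
    rw [g.2 a b]; exact f.2 _ _⟩
  one := ⟨id, fun _ _ => rfl⟩
  mul_assoc f g h := rfl
  one_mul f := rfl
  mul_one f := rfl

/-- A quandle homomorphism preserves the inverse action. -/
lemma qdlHom_invAct {A B : Type} [Rack A] [Rack B] (f : A → B) (hf : IsQdlHom f)
    (a b : A) : f (a ◃⁻¹ b) = f a ◃⁻¹ f b := by
  have : f a ◃ f (a ◃⁻¹ b) = f a ◃ (f a ◃⁻¹ f b) := by
    rw [← hf, Rack.right_inv, Rack.right_inv]
  exact Rack.left_cancel (f a) |>.mp this

/-- For a residually finite quandle with only finitely many congruences of each index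
`n ≥ 1`, the endomorphism monoid is residually finite. -/
theorem stmt_2 {Q : Type} [Quandle Q]
    (hrf : QdlResiduallyFinite Q)
    (hfin : ∀ n : ℕ, 1 ≤ n →
      {α : Setoid Q | IsQdlCong α ∧ Nat.card (Quotient α) = n}.Finite) :
    ∀ f g : QdlEnd Q, f ≠ g →
      ∃ (M : Type) (_ : Monoid M) (_ : Finite M) (Φ : QdlEnd Q →* M), Φ f ≠ Φ g := by
  intro f g hfg
  -- find a point where f and g differ
  obtain ⟨a, ha⟩ : ∃ a, f.1 a ≠ g.1 a := by
    by_contra h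
    push_neg at h
    exact hfg (Subtype.ext (funext h))
  haveI : Nonempty Q := ⟨a⟩
  obtain ⟨F, _, _, h, hh, hne⟩ := hrf _ _ ha
  -- the kernel of h is a quandle congruence of finite index
  set α : Setoid Q := Setoid.ker h with hα
  have hαrel : ∀ x y, α.r x y ↔ h x = h y := fun x y => Iff.rfl
  have hαcong : IsQdlCong α := by
    intro x y c d hxy hcd
    constructor
    · show h (x ◃ c) = h (y ◃ d)
      rw [hh, hh, hαrel x y |>.mp hxy, hαrel c d |>.mp hcd]
    · show h (x ◃⁻¹ c) = h (y ◃⁻¹ d)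
      rw [qdlHom_invAct h hh, qdlHom_invAct h hh,
        hαrel x y |>.mp hxy, hαrel c d |>.mp hcd]
  have hαinj : Function.Injective (Quotient.lift h (fun x y hxy => hxy) :
      Quotient α → F) := by
    intro x y
    induction x using Quotient.ind
    induction y using Quotient.ind
    intro hxy
    exact Quotient.sound hxy
  haveI hαfin : Finite (Quotient α) := Finite.of_injective _ hαinj
  set n : ℕ := Nat.card (Quotient α) with hn
  have hn1 : 1 ≤ n := Nat.one_le_iff_ne_zero.mpr (Nat.card_ne_zero.mpr ⟨⟨⟦a⟧⟩, hαfin⟩)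
  -- the set of all congruences of index between 1 and n
  set S : Set (Setoid Q) :=
    {γ : Setoid Q | IsQdlCong γ ∧ 1 ≤ Nat.card (Quotient γ) ∧ Nat.card (Quotient γ) ≤ n}
    with hS
  have hSfin : S.Finite := by
    have : S ⊆ ⋃ k ∈ Finset.Icc 1 n,
        {γ : Setoid Q | IsQdlCong γ ∧ Nat.card (Quotient γ) = k} := by
      intro γ ⟨h1, h2, h3⟩
      exact Set.mem_biUnion (Finset.mem_Icc.mpr ⟨h2, h3⟩) ⟨h1, rfl⟩
    exact Set.Finite.subset (Set.Finite.biUnion (Finset.finite_toSet _)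
      (fun k hk => hfin k (Finset.mem_Icc.mp hk).1)) this
  have hαS : α ∈ S := ⟨hαcong, hn1, le_refl n⟩
  -- every γ ∈ S is finite
  have hfinQ : ∀ γ ∈ S, Finite (Quotient γ) := by
    intro γ hγ
    obtain ⟨-, h2, -⟩ := hγ
    exact Nat.finite_of_card_ne_zero (by omega)
  -- S is closed under pulling back along endomorphisms
  have hScomap : ∀ (e : QdlEnd Q), ∀ γ ∈ S, Setoid.comap e.1 γ ∈ S := by
    intro e γ hγ
    haveI := hfinQ γ hγ
    have hcong : IsQdlCong (Setoid.comap e.1 γ) := by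
      intro x y c d hxy hcd
      have h1 : e.1 (x ◃ c) = e.1 x ◃ e.1 c := e.2 x c
      have h2 : e.1 (y ◃ d) = e.1 y ◃ e.1 d := e.2 y d
      have h3 := qdlHom_invAct e.1 e.2 x c
      have h4 := qdlHom_invAct e.1 e.2 y d
      constructor
      · show γ.r (e.1 (x ◃ c)) (e.1 (y ◃ d))
        rw [h1, h2]
        exact (hγ.1 _ _ _ _ hxy hcd).1
      · show γ.r (e.1 (x ◃⁻¹ c)) (e.1 (y ◃⁻¹ d))
        rw [h3, h4]
        exact (hγ.1 _ _ _ _ hxy hcd).2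
    have hinjmap : Function.Injective
        (Quotient.lift (fun q => (Quotient.mk γ (e.1 q)))
          (fun x y hxy => Quotient.sound hxy) :
          Quotient (Setoid.comap e.1 γ) → Quotient γ) := by
      rintro ⟨x⟩ ⟨y⟩ hxy
      have hxy' : (Quotient.mk γ (e.1 x)) = Quotient.mk γ (e.1 y) := hxy
      have hr : γ.r (e.1 x) (e.1 y) := Quotient.exact hxy'
      exact Quotient.sound hr
    haveI : Finite (Quotient (Setoid.comap e.1 γ)) := Finite.of_injective _ hinjmap
    refine ⟨hcong, ?_, ?_⟩
    · exact Nat.one_le_iff_ne_zero.mpr (Nat.card_ne_zero.mpr ⟨⟨⟦a⟧⟩, inferInstance⟩)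
    · exact le_trans (Nat.card_le_card_of_injective _ hinjmap) hγ.2.2
  -- β: the intersection of all congruences in S; it is fully invariant of finite index
  set β : Setoid Q := sInf S with hβ
  have hβle : ∀ γ ∈ S, ∀ x y, β.r x y → γ.r x y := by
    intro γ hγ x y hxy
    exact Setoid.sInf_iff.mp hxy γ hγ
  have hβinv : ∀ (e : QdlEnd Q), ∀ x y, β.r x y → β.r (e.1 x) (e.1 y) := by
    intro e x y hxy
    refine Setoid.sInf_iff.mpr (fun γ hγ => ?_)
    exact hβle _ (hScomap e γ hγ) x y hxy
  -- Quotient β is finite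
  haveI hSfin' : Finite S := hSfin
  have hβinj : Function.Injective
      (Quotient.lift (fun q => (fun γ : S => Quotient.mk γ.1 q))
        (fun x y hxy => funext fun γ => Quotient.sound (hβle γ.1 γ.2 x y hxy)) :
        Quotient β → ∀ γ : S, Quotient γ.1) := by
    intro x y
    induction x using Quotient.ind
    induction y using Quotient.ind
    intro hxy
    refine Quotient.sound (Setoid.sInf_iff.mpr fun γ hγ => ?_)
    exact Quotient.exact (congrFun hxy ⟨γ, hγ⟩)
  haveI : ∀ γ : S, Finite (Quotient γ.1) := fun γ => hfinQ γ.1 γ.2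
  haveI : Finite (∀ γ : S, Quotient γ.1) := Pi.finite
  haveI hβfin : Finite (Quotient β) := Finite.of_injective _ hβinj
  -- the monoid homomorphism into Function.End (Quotient β)
  refine ⟨Function.End (Quotient β), inferInstance, by
    unfold Function.End; exact Pi.finite, ?_, ?_⟩
  · exact {
      toFun := fun e => (Quotient.map e.1 (fun x y hxy => hβinv e x y hxy) :
        Quotient β → Quotient β)
      map_one' := by
        funext x
        induction x using Quotient.ind
        rfl
      map_mul' := by
        intro e₁ e₂
        funext x
        induction x using Quotient.ind
        rfl }
  · intro hΦ
    have : (Quotient.mk β (f.1 a)) = Quotient.mk β (g.1 a) := congrFun hΦ ⟦a⟧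
    have hβfg : β.r (f.1 a) (g.1 a) := Quotient.exact this
    exact hne (hβle α hαS _ _ hβfg)
end

section
/- Let Q be a topological quandle and a ∈ Q. Then the connected component Q^a of a in Q is a subquandle of Q: for all x, y ∈ Q^a, both x*y ∈ Q^a and x*⁻¹y ∈ Q^a. -/
open Quandles

/-- A topological quandle: the quandle operation is (jointly) continuous and the
action of each element is a homeomorphism (i.e. its inverse `y ◃⁻¹ ·` is continuous). -/
structure IsTopQuandle (Q : Type) [Quandle Q] [TopologicalSpace Q] : Prop where
  continuous_act : Continuous fun p : Q × Q => p.1 ◃ p.2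
  continuous_invAct : ∀ y : Q, Continuous fun x : Q => y ◃⁻¹ x
/-- The connected component of a point in a topological quandle is a subquandle:
it is closed under `◃` and `◃⁻¹`. -/
theorem stmt_8 {Q : Type} [Quandle Q] [TopologicalSpace Q]
    (htq : IsTopQuandle Q) (a : Q) :
    ∀ x ∈ connectedComponent a, ∀ y ∈ connectedComponent a,
      x ◃ y ∈ connectedComponent a ∧ x ◃⁻¹ y ∈ connectedComponent a := by
  intro x hx y hy
  have key : ∀ f : Q → Q, Continuous f → f x = x → f y ∈ connectedComponent a := by
    intro f hf hfx
    have hcc : connectedComponent x = connectedComponent a := (connectedComponent_eq hx).symm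
    have h1 : f y ∈ connectedComponent (f x) :=
      hf.image_connectedComponent_subset x ⟨y, by rwa [hcc], rfl⟩
    rw [hfx, hcc] at h1
    exact h1
  constructor
  · exact key (fun z => x ◃ z)
      (htq.continuous_act.comp (continuous_const.prodMk continuous_id)) Quandle.fix
  · exact key (fun z => x ◃⁻¹ z) (htq.continuous_invAct x) Quandle.fix_inv
end

section
/- Let Q be a compact Hausdorff topological quandle. Then Q is topologically residually finite if and only if there exist an index set ι, a family (F_i)_{i∈ι} of finite quandles each carrying the discrete topology, and a map e : Q → Π_{i∈ι} F_i (the product carrying the componentwise quandle operation and the product topology) such that e is an injective quandle homomorphism, continuous, and has closed range (hence e is a homeomorphism onto a closed subquandle of the product). -/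
open Quandles

/-- A topologically residually finite quandle: distinct points are separated by a
continuous homomorphism to a finite discrete quandle. -/
def TopResFinite (Q : Type) [Quandle Q] [TopologicalSpace Q] : Prop :=
  ∀ a b : Q, a ≠ b → ∃ (F : Type) (_ : Quandle F) (_ : TopologicalSpace F)
    (_ : DiscreteTopology F) (_ : Finite F) (f : Q → F),
      IsQdlHom f ∧ Continuous f ∧ f a ≠ f b
/-- A compact Hausdorff topological quandle is topologically residually finite iff it
embeds (as a topological quandle, with closed range) into a product of finite discrete
quandles, with componentwise operations. -/
theorem stmt_14 {Q : Type} [Quandle Q] [TopologicalSpace Q] [CompactSpace Q] [T2Space Q]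
    (htq : IsTopQuandle Q) :
    TopResFinite Q ↔
      ∃ (ι : Type) (F : ι → Type) (_ : ∀ i, Quandle (F i)) (_ : ∀ i, Finite (F i))
        (_ : ∀ i, TopologicalSpace (F i)) (_ : ∀ i, DiscreteTopology (F i))
        (e : Q → ∀ i, F i),
        Function.Injective e ∧
        (∀ a b : Q, e (a ◃ b) = fun i => e a i ◃ e b i) ∧
        Continuous e ∧ IsClosed (Set.range e) := by
  constructor
  · intro h
    classical
    set ι := {p : Q × Q // p.1 ≠ p.2} with hι
    choose F qF tF dF finF f hhom hcont hne using fun p : ι => h p.1.1 p.1.2 p.2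
    refine ⟨ι, F, qF, finF, tF, dF, fun x p => f p x, ?_, ?_, ?_, ?_⟩
    · intro a b hab
      by_contra hne'
      exact hne ⟨(a, b), hne'⟩ (congrFun hab ⟨(a, b), hne'⟩)
    · intro a b
      funext p
      exact hhom p a b
    · exact continuous_pi fun p => (hcont p)
    · haveI : ∀ p : ι, T2Space (F p) := fun p => by
        haveI := dF p; exact DiscreteTopology.toT2Space
      have hc : Continuous (fun x : Q => fun p : ι => f p x) :=
        continuous_pi fun p => hcont p
      exact (isCompact_range hc).isClosed
  · rintro ⟨ι, F, qF, finF, tF, dF, e, hinj, hhom, hcont, -⟩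
    intro a b hab
    have : e a ≠ e b := fun h => hab (hinj h)
    obtain ⟨i, hi⟩ := Function.ne_iff.mp this
    exact ⟨F i, qF i, tF i, dF i, finF i, fun x => e x i,
      fun x y => congrFun (hhom x y) i, (continuous_apply i).comp hcont, hi⟩
end

section
/- Let Q be a compact Hausdorff topological quandle that is topologically finitely generated, i.e., there is a finite subset X ⊆ Q such that the smallest subset of Q containing X and closed under * and *⁻¹ is dense in Q. Then for each n ≥ 1, the set of open congruences on Q of index n is finite. -/
open Quandles

/-- A topologically finitely generated compact Hausdorff topological quandle has only
finitely many open congruences of each index `n ≥ 1`. Here "topologically finitely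
generated" means: there is a finite set `X` whose generated subquandle (the smallest
subset containing `X` and closed under `◃` and `◃⁻¹`) is dense. -/
theorem stmt_16 {Q : Type} [Quandle Q] [TopologicalSpace Q] [CompactSpace Q] [T2Space Q]
    (htq : IsTopQuandle Q)
    (hfg : ∃ X : Set Q, X.Finite ∧
      Dense (⋂₀ {S : Set Q | X ⊆ S ∧ ∀ a ∈ S, ∀ b ∈ S, a ◃ b ∈ S ∧ a ◃⁻¹ b ∈ S})) :
    ∀ n : ℕ, 1 ≤ n →
      {α : Setoid Q | IsQdlCong α ∧ IsOpen {p : Q × Q | α.r p.1 p.2} ∧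
        Nat.card (Quotient α) = n}.Finite := by
  intro n hn
  obtain ⟨X, hXfin, hXdense⟩ := hfg
  haveI := hXfin.to_subtype
  set D : Set Q :=
    ⋂₀ {S : Set Q | X ⊆ S ∧ ∀ a ∈ S, ∀ b ∈ S, a ◃ b ∈ S ∧ a ◃⁻¹ b ∈ S} with hD
  set S : Set (Setoid Q) := {α : Setoid Q | IsQdlCong α ∧ IsOpen {p : Q × Q | α.r p.1 p.2} ∧
        Nat.card (Quotient α) = n} with hS
  -- For each congruence in S, build a kernel function to `Fin n` together with operation
  -- tables compatible with it.
  have claim : ∀ α ∈ S, ∃ (q : Q → Fin n) (op op' : Fin n → Fin n → Fin n),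
      (∀ a b : Q, q a = q b ↔ α.r a b) ∧ (∀ a b : Q, q (a ◃ b) = op (q a) (q b)) ∧
      (∀ a b : Q, q (a ◃⁻¹ b) = op' (q a) (q b)) := by
    rintro α ⟨hcong, _, hcard⟩
    haveI : Finite (Quotient α) := Nat.finite_of_card_ne_zero (by rw [hcard]; omega)
    let e : Quotient α ≃ Fin n := (Finite.equivFin _).trans (finCongr hcard)
    refine ⟨fun a => e (Quotient.mk α a),
      fun i j => e (Quotient.mk α ((e.symm i).out ◃ (e.symm j).out)),
      fun i j => e (Quotient.mk α ((e.symm i).out ◃⁻¹ (e.symm j).out)), ?_, ?_, ?_⟩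
    · intro a b
      rw [e.injective.eq_iff]
      exact Quotient.eq
    · intro a b
      have hpick : ∀ c : Q, α.r c ((e.symm (e (Quotient.mk α c))).out) := by
        intro c
        have : Quotient.mk α ((e.symm (e (Quotient.mk α c))).out) = Quotient.mk α c := by
          rw [Quotient.out_eq, e.symm_apply_apply]
        exact Setoid.symm (Quotient.eq.mp this)
      have := (hcong a _ b _ (hpick a) (hpick b)).1
      exact congrArg e (Quotient.sound this)
    · intro a b
      have hpick : ∀ c : Q, α.r c ((e.symm (e (Quotient.mk α c))).out) := by
        intro c
        have : Quotient.mk α ((e.symm (e (Quotient.mk α c))).out) = Quotient.mk α c := by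
          rw [Quotient.out_eq, e.symm_apply_apply]
        exact Setoid.symm (Quotient.eq.mp this)
      have := (hcong a _ b _ (hpick a) (hpick b)).2
      exact congrArg e (Quotient.sound this)
  choose q op op' hker hop hop' using claim
  rw [← Set.finite_coe_iff]
  refine Finite.of_injective
    (fun s : S => ((fun x : X => q s.1 s.2 (x : Q)), op s.1 s.2, op' s.1 s.2)) ?_
  rintro s1 s2 heq
  have hX := congrArg Prod.fst heq
  have hopeq := congrArg (fun p => p.2.1) heq
  have hop'eq := congrArg (fun p => p.2.2) heq
  simp only at hX hopeq hop'eq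
  -- The equalizer
  set E : Set Q := {a : Q | q s1.1 s1.2 a = q s2.1 s2.2 a} with hE
  have hmem : E ∈ {S : Set Q | X ⊆ S ∧ ∀ a ∈ S, ∀ b ∈ S, a ◃ b ∈ S ∧ a ◃⁻¹ b ∈ S} := by
    constructor
    · intro x hx
      exact congrFun hX ⟨x, hx⟩
    · intro a ha b hb
      have ha' : q s1.1 s1.2 a = q s2.1 s2.2 a := ha
      have hb' : q s1.1 s1.2 b = q s2.1 s2.2 b := hb
      constructor
      · show q s1.1 s1.2 (a ◃ b) = q s2.1 s2.2 (a ◃ b)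
        rw [hop s1.1 s1.2, hop s2.1 s2.2, hopeq, ha', hb']
      · show q s1.1 s1.2 (a ◃⁻¹ b) = q s2.1 s2.2 (a ◃⁻¹ b)
        rw [hop' s1.1 s1.2, hop' s2.1 s2.2, hop'eq, ha', hb']
  have hDE : D ⊆ E := Set.sInter_subset_of_mem hmem
  have hclosed : IsClosed E := by
    rw [← isOpen_compl_iff, isOpen_iff_mem_nhds]
    intro x hx
    have hU1 : IsOpen {y : Q | s1.1.r y x} := by
      have := s1.2.2.1.preimage (continuous_id.prodMk (continuous_const (y := x)))
      exact this
    have hU2 : IsOpen {y : Q | s2.1.r y x} := by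
      have := s2.2.2.1.preimage (continuous_id.prodMk (continuous_const (y := x)))
      exact this
    refine mem_nhds_iff.mpr ⟨{y : Q | s1.1.r y x} ∩ {y : Q | s2.1.r y x}, ?_, hU1.inter hU2, ?_, ?_⟩
    · rintro y ⟨hy1, hy2⟩
      have e1 : q s1.1 s1.2 y = q s1.1 s1.2 x := (hker s1.1 s1.2 y x).mpr hy1
      have e2 : q s2.1 s2.2 y = q s2.1 s2.2 x := (hker s2.1 s2.2 y x).mpr hy2
      intro hey
      have hey' : q s1.1 s1.2 y = q s2.1 s2.2 y := hey
      exact hx (show q s1.1 s1.2 x = q s2.1 s2.2 x by rw [← e1, ← e2, hey'])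
    · exact s1.1.refl x
    · exact s2.1.refl x
  have hall : ∀ a : Q, q s1.1 s1.2 a = q s2.1 s2.2 a := by
    intro a
    have h1 : a ∈ closure D := hXdense a
    have h2 : closure D ⊆ E := hclosed.closure_subset_iff.mpr hDE
    exact h2 h1
  apply Subtype.ext
  apply Setoid.ext
  intro a b
  constructor
  · intro h
    have h1 : q s1.1 s1.2 a = q s1.1 s1.2 b := (hker s1.1 s1.2 a b).mpr h
    exact (hker s2.1 s2.2 a b).mp (by rw [← hall a, ← hall b]; exact h1)
  · intro h
    have h2 : q s2.1 s2.2 a = q s2.1 s2.2 b := (hker s2.1 s2.2 a b).mpr h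
    exact (hker s1.1 s1.2 a b).mp (by rw [hall a, hall b]; exact h2)
end
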